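/- arXiv:2410.23644 — 3 statements merged into one kernel-verified Lean document; each statement's English description precedes it below -/
import Mathlib

section
/- Let (𝒳, ρ, ν) be a metric measure space where ν is a finite Borel measure, and let (X_n)_{n≥1} be a stochastic process in 𝒳 that is uniformly dominated by ν at rate ε : (0,∞) → (0,∞) with ε(δ) → 0 as δ → 0. Then for every ε > 0 there exists a subset 𝒳' ⊆ 𝒳 of bounded diameter such that for every (measurable) nearest neighbor process (X̃_n), almost surely limsup_{N→∞} (1/N) Σ_{n=1}^N 1{X_n ∉ 𝒳' or X̃_n ∉ 𝒳'} < ε. -/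
open MeasureTheory Filter Set Metric
open scoped ENNReal NNReal

noncomputable section

/-- The margin of a point: distance to the nearest differently-labeled point (`⊤` if none). -/
def margin {α 𝒴 : Type*} [PseudoMetricSpace α] (η : α → 𝒴) (x : α) : ℝ≥0∞ :=
  ⨅ (x' : α) (_ : η x' ≠ η x), edist x x'

/-- The boundary of a labeling function: the set of points with zero margin. -/
def labelBoundary {α 𝒴 : Type*} [PseudoMetricSpace α] (η : α → 𝒴) : Set α :=
  {x | margin η x = 0}

/-- A set is mutually-labeling for `η` if its diameter is smaller than the margin of
each of its points. -/
def MutuallyLabeling {α 𝒴 : Type*} [PseudoMetricSpace α] (η : α → 𝒴) (U : Set α) : Prop :=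
  ∀ x ∈ U, EMetric.diam U < margin η x

/-- `Xt` is a nearest-neighbor process for the sequence `X` (indices start at 1):
for every `n ≥ 2`, `Xt n` is one of `X 1, …, X (n-1)` realizing the minimal distance
to `X n`. -/
def IsNNProcess {α : Type*} [PseudoMetricSpace α] (X Xt : ℕ → α) : Prop :=
  ∀ n, 2 ≤ n → (∃ m, 1 ≤ m ∧ m < n ∧ Xt n = X m) ∧
    ∀ m, 1 ≤ m → m < n → dist (X n) (Xt n) ≤ dist (X n) (X m)

/-- The natural filtration of the process `X`: at time `n` it is `σ(X 1, …, X n)`. -/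
def natFilt {Ω α : Type*} [MeasurableSpace α] (X : ℕ → Ω → α) (n : ℕ) : MeasurableSpace Ω :=
  ⨆ m ∈ Set.Icc 1 n, MeasurableSpace.comap (X m) inferInstance

/-- `X` is uniformly dominated by `ν` at rate `ε` (uniform absolute continuity):
for every `δ > 0` and every measurable `A` with `ν A < δ`, almost surely
`P(X n ∈ A | 𝓕 (n-1)) < ε δ` for every `n ≥ 1`. -/
def UniformlyDominatedAtRate {Ω α : Type*} [MeasurableSpace Ω] [MeasurableSpace α]
    (P : Measure Ω) (X : ℕ → Ω → α) (ν : Measure α) (ε : ℝ → ℝ) : Prop :=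
  ∀ δ : ℝ, 0 < δ → ∀ A : Set α, MeasurableSet A → ν A < ENNReal.ofReal δ →
    ∀ᵐ ω ∂P, ∀ n, 1 ≤ n →
      (P[fun ω' => A.indicator (fun _ => (1 : ℝ)) (X n ω') | natFilt X (n - 1)]) ω < ε δ

/-- `X` is uniformly dominated by `ν`. -/
def UniformlyDominated {Ω α : Type*} [MeasurableSpace Ω] [MeasurableSpace α]
    (P : Measure Ω) (X : ℕ → Ω → α) (ν : Measure α) : Prop :=
  ∀ ε : ℝ, 0 < ε → ∃ δ : ℝ, 0 < δ ∧ ∀ A : Set α, MeasurableSet A → ν A < ENNReal.ofReal δ →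
    ∀ᵐ ω ∂P, ∀ n, 1 ≤ n →
      (P[fun ω' => A.indicator (fun _ => (1 : ℝ)) (X n ω') | natFilt X (n - 1)]) ω < ε

/-- `X` is ergodically dominated by `ν` (ergodic continuity). -/
def ErgodicallyDominated {Ω α : Type*} [MeasurableSpace Ω] [MeasurableSpace α]
    (P : Measure Ω) (X : ℕ → Ω → α) (ν : Measure α) : Prop :=
  ∀ ε : ℝ, 0 < ε → ∃ δ : ℝ, 0 < δ ∧ ∀ A : Set α, MeasurableSet A → ν A < ENNReal.ofReal δ →
    ∀ᵐ ω ∂P, Filter.limsup (fun N : ℕ =>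
      (∑ n ∈ Finset.Icc 1 N, A.indicator (fun _ => (1 : ℝ)) (X n ω)) / N) atTop < ε

/-- `X` is a `σ`-smoothed process with respect to `ν`. -/
def Smoothed {Ω α : Type*} [MeasurableSpace Ω] [MeasurableSpace α]
    (P : Measure Ω) (X : ℕ → Ω → α) (ν : Measure α) (σ : ℝ) : Prop :=
  ∀ A : Set α, MeasurableSet A →
    ∀ᵐ ω ∂P, ∀ n, 1 ≤ n →
      (P[fun ω' => A.indicator (fun _ => (1 : ℝ)) (X n ω') | natFilt X (n - 1)]) ω ≤
        σ⁻¹ * (ν A).toReal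

/-- `α` is a `d`-doubling metric space: every ball can be covered by `2 ^ d` balls of
half the radius. -/
def DoublingWith (α : Type*) [PseudoMetricSpace α] (d : ℕ) : Prop :=
  ∀ (x : α) (r : ℝ), ∃ t : Finset α, t.card ≤ 2 ^ d ∧ ball x r ⊆ ⋃ y ∈ t, ball y (r / 2)

/-- `(α, ν)` is upper doubling with parameters `(c, d)`. -/
def UpperDoubling (α : Type*) [PseudoMetricSpace α] [MeasurableSpace α]
    (ν : Measure α) (c : ℝ) (d : ℕ) : Prop :=
  DoublingWith α d ∧ ∀ (x : α) (r : ℝ), 0 < r → ν (ball x r) ≤ ENNReal.ofReal (c * r ^ d)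

/-- The `r`-packing number of a set `U`. -/
def packingNumber {α : Type*} [PseudoMetricSpace α] (r : ℝ) (U : Set α) : ℕ∞ :=
  ⨆ (Z : Finset α) (_ : ↑Z ⊆ U ∧ ∀ z ∈ Z, ∀ z' ∈ Z, z ≠ z' → r ≤ dist z z'), (Z.card : ℕ∞)

/-- The `r`-covering number of a set `A`. -/
def coveringNumber {α : Type*} [PseudoMetricSpace α] (r : ℝ) (A : Set α) : ℕ∞ :=
  ⨅ (t : Finset α) (_ : A ⊆ ⋃ y ∈ t, ball y r), (t.card : ℕ∞)

/-- The upper box-counting dimension of a set. -/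
def boxDim {α : Type*} [PseudoMetricSpace α] (A : Set α) : ℝ :=
  Filter.limsup (fun r : ℝ => Real.log ((coveringNumber r A).toNat : ℝ) / Real.log (1 / r))
    (nhdsWithin 0 (Set.Ioi 0))

/-- The mutually-labeling covering number of `V` for `η`. -/
def mlCoveringNumber {α 𝒴 : Type*} [PseudoMetricSpace α] (η : α → 𝒴) (V : Set α) : ℕ∞ :=
  ⨅ (𝒰 : Finset (Set α)) (_ : (∀ U ∈ 𝒰, MutuallyLabeling η U) ∧ V ⊆ ⋃ U ∈ 𝒰, U),
    (𝒰.card : ℕ∞)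

/-- The `r`-expansion of a set. -/
def expansion {α : Type*} [PseudoMetricSpace α] (A : Set α) (r : ℝ) : Set α :=
  ⋃ x ∈ A, ball x r

/-- The upper Minkowski content of `A` with respect to `ν`. -/
def minkowskiContent {α : Type*} [PseudoMetricSpace α] [MeasurableSpace α]
    (ν : Measure α) (A : Set α) : ℝ≥0∞ :=
  Filter.limsup (fun r : ℝ => (ν (expansion A r) - ν A) / ENNReal.ofReal r)
    (nhdsWithin 0 (Set.Ioi 0))

/-- A length space: the distance between two points is the infimum of lengths of
continuous paths joining them. -/
def IsLengthSpace (α : Type*) [PseudoMetricSpace α] : Prop :=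
  ∀ x y : α, edist x y =
    ⨅ (γ : ℝ → α) (_ : ContinuousOn γ (Set.Icc 0 1)) (_ : γ 0 = x) (_ : γ 1 = y),
      eVariationOn γ (Set.Icc 0 1)

/-- The ball associated to a (center, dyadic level) pair: radius `2 ^ (-level)`. -/
def ballOf {α : Type*} [PseudoMetricSpace α] (p : α × ℕ) : Set α :=
  ball p.1 ((2 : ℝ) ^ (-(p.2 : ℤ)))

/-- The insertion rank of a new point `x` relative to an existing cover tree `C`:
the least `ℓ ≥ 1` such that no ball of radius `2 ^ (-ℓ)` in `C` contains `x`. -/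
def nextRank {α : Type*} [PseudoMetricSpace α] (C : Set (α × ℕ)) (x : α) : ℕ :=
  sInf {ℓ : ℕ | 1 ≤ ℓ ∧ ∀ q ∈ C, q.2 = ℓ → x ∉ ballOf q}

/-- Sequentially constructed cover trees for the points `a 1, a 2, …`; a cover tree is
recorded as the set of its (center, dyadic level) pairs. -/
def coverTree {α : Type*} [PseudoMetricSpace α] (a : ℕ → α) : ℕ → Set (α × ℕ)
  | 0 => ∅
  | 1 => {p | p.1 = a 1}
  | (k + 2) => coverTree a (k + 1) ∪
      {p | p.1 = a (k + 2) ∧ nextRank (coverTree a (k + 1)) (a (k + 2)) ≤ p.2}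

/-- The insertion ranks of the sequentially constructed cover trees. -/
def insertionRank {α : Type*} [PseudoMetricSpace α] (a : ℕ → α) : ℕ → ℕ
  | 0 => 0
  | 1 => 0
  | (k + 2) => nextRank (coverTree a (k + 1)) (a (k + 2))

/-- Strong law for bounded adapted sequences: the averaged martingale differences tend to 0. -/
lemma slln_aux {Ω : Type*} [m0 : MeasurableSpace Ω] (P : Measure Ω) [IsProbabilityMeasure P]
    (𝓕 : ℕ → MeasurableSpace Ω) (hle : ∀ n, 𝓕 n ≤ m0) (hmono : Monotone 𝓕)
    (Y : ℕ → Ω → ℝ) (hY : ∀ n, 1 ≤ n → StronglyMeasurable[𝓕 n] (Y n))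
    (hY0 : ∀ n ω, 0 ≤ Y n ω) (hY1 : ∀ n ω, Y n ω ≤ 1) :
    ∀ᵐ ω ∂P, Tendsto
      (fun N : ℕ => (∑ n ∈ Finset.Icc 1 N, (Y n ω - (P[Y n | 𝓕 (n-1)]) ω)) / N)
      atTop (nhds 0) := by
  set g : ℕ → Ω → ℝ := fun n => P[Y n | 𝓕 (n-1)] with hg
  set D : ℕ → Ω → ℝ := fun n ω => Y n ω - g n ω with hD
  set S : ℕ → Ω → ℝ := fun N ω => ∑ n ∈ Finset.Icc 1 N, D n ω with hS
  -- integrability of Y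
  have hYint : ∀ n, 1 ≤ n → Integrable (Y n) P := by
    intro n hn
    refine Integrable.mono' (integrable_const 1) (((hY n hn).mono (hle n)).aestronglyMeasurable) ?_
    exact Eventually.of_forall fun ω => by
      rw [Real.norm_eq_abs, abs_le]; exact ⟨by linarith [hY0 n ω], hY1 n ω⟩
  have hgint : ∀ n, Integrable (g n) P := fun n => integrable_condExp
  have hg0 : ∀ n, 0 ≤ᵐ[P] g n := fun n => condExp_nonneg (Eventually.of_forall (hY0 n))
  have hg1 : ∀ n, 1 ≤ n → g n ≤ᵐ[P] fun _ => (1 : ℝ) := by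
    intro n hn
    have h := condExp_mono (m := 𝓕 (n-1)) (hYint n hn) (integrable_const 1)
      (Eventually.of_forall (hY1 n))
    rwa [condExp_const (hle (n-1))] at h
  have hDint : ∀ n, 1 ≤ n → Integrable (D n) P := fun n hn => (hYint n hn).sub (hgint n)
  have hDbd : ∀ n, 1 ≤ n → ∀ᵐ ω ∂P, |D n ω| ≤ 1 := by
    intro n hn
    filter_upwards [hg0 n, hg1 n hn] with ω h0 h1
    simp only [Pi.zero_apply] at h0
    rw [abs_le]
    constructor <;> simp only [hD] <;> [skip; skip] <;> nlinarith [hY0 n ω, hY1 n ω]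
  have hDcond : ∀ n, 1 ≤ n → P[D n | 𝓕 (n-1)] =ᵐ[P] 0 := by
    intro n hn
    have h1 : P[D n | 𝓕 (n-1)] =ᵐ[P] P[Y n | 𝓕 (n-1)] - P[g n | 𝓕 (n-1)] :=
      condExp_sub (hYint n hn) (hgint n) _
    have h2 : P[g n | 𝓕 (n-1)] =ᵐ[P] P[Y n | 𝓕 (n-1)] :=
      condExp_condExp_of_le le_rfl (hle (n-1))
    filter_upwards [h1, h2] with ω e1 e2
    simp only [Pi.sub_apply, Pi.zero_apply] at *
    rw [e1, e2]; ring
  have hDSM : ∀ n, 1 ≤ n → StronglyMeasurable[𝓕 n] (D n) := by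
    intro n hn
    exact (hY n hn).sub (stronglyMeasurable_condExp.mono (hmono (Nat.sub_le n 1)))
  have hSSM : ∀ N, StronglyMeasurable[𝓕 N] (S N) := by
    intro N
    apply Finset.stronglyMeasurable_fun_sum
    intro n hn
    rw [Finset.mem_Icc] at hn
    exact (hDSM n hn.1).mono (hmono hn.2)
  have hSint : ∀ N, Integrable (S N) P := by
    intro N
    apply integrable_finset_sum
    intro n hn
    rw [Finset.mem_Icc] at hn
    exact hDint n hn.1
  have hDbd' : ∀ᵐ ω ∂P, ∀ n, 1 ≤ n → |D n ω| ≤ 1 := by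
    rw [ae_all_iff]
    intro n
    by_cases hn : 1 ≤ n
    · filter_upwards [hDbd n hn] with ω h _; exact h
    · exact Eventually.of_forall fun ω h => absurd h hn
  have hSbd_pt : ∀ ω, (∀ n, 1 ≤ n → |D n ω| ≤ 1) → ∀ N, |S N ω| ≤ N := by
    intro ω h N
    calc |S N ω| ≤ ∑ n ∈ Finset.Icc 1 N, |D n ω| := Finset.abs_sum_le_sum_abs _ _
      _ ≤ ∑ _n ∈ Finset.Icc 1 N, (1:ℝ) := Finset.sum_le_sum fun n hn => by
          rw [Finset.mem_Icc] at hn; exact h n hn.1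
      _ ≤ N := by simp [Nat.card_Icc]
  have hSbd : ∀ N, ∀ᵐ ω ∂P, |S N ω| ≤ N := by
    intro N
    filter_upwards [hDbd'] with ω h
    exact hSbd_pt ω h N
  -- cross term vanishes
  have hcross : ∀ N : ℕ, ∫ ω, S N ω * D (N+1) ω ∂P = 0 := by
    intro N
    have hSM : StronglyMeasurable[𝓕 N] (S N) := hSSM N
    have hprod_int : Integrable (fun ω => S N ω * D (N+1) ω) P := by
      refine Integrable.mono' (integrable_const ((N:ℝ))) ?_ ?_
      · exact ((hSint N).aestronglyMeasurable).mul
          ((hDint (N+1) (Nat.le_add_left 1 N)).aestronglyMeasurable)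
      · filter_upwards [hSbd N, hDbd (N+1) (Nat.le_add_left 1 N)] with ω h1 h2
        rw [Real.norm_eq_abs, abs_mul]
        calc |S N ω| * |D (N+1) ω| ≤ (N:ℝ) * 1 :=
              mul_le_mul h1 h2 (abs_nonneg _) (Nat.cast_nonneg N)
          _ = N := mul_one _
    have hpull : P[fun ω => S N ω * D (N+1) ω | 𝓕 N]
        =ᵐ[P] fun ω => S N ω * (P[D (N+1) | 𝓕 N]) ω := by
      exact condExp_mul_of_stronglyMeasurable_left hSM hprod_int (hDint (N+1) (Nat.le_add_left 1 N))
    have hzero : (fun ω => S N ω * (P[D (N+1) | 𝓕 N]) ω) =ᵐ[P] 0 := by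
      have := hDcond (N+1) (Nat.le_add_left 1 N)
      simp only [Nat.add_sub_cancel] at this
      filter_upwards [this] with ω h
      simp [h]
    calc ∫ ω, S N ω * D (N+1) ω ∂P
        = ∫ ω, (P[fun ω' => S N ω' * D (N+1) ω' | 𝓕 N]) ω ∂P :=
          (integral_condExp (hle N)).symm
      _ = ∫ ω, (0:Ω → ℝ) ω ∂P := integral_congr_ae (hpull.trans hzero)
      _ = 0 := by simp
  -- L² bound
  have hD2int : ∀ n, 1 ≤ n → Integrable (fun ω => D n ω ^ 2) P := by
    intro n hn
    refine Integrable.mono' (integrable_const 1) ?_ ?_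
    · exact (hDint n hn).aestronglyMeasurable.pow 2
    · filter_upwards [hDbd n hn] with ω h
      rw [Real.norm_eq_abs, abs_pow]
      calc |D n ω| ^ 2 ≤ 1 ^ 2 := pow_le_pow_left₀ (abs_nonneg _) h 2
        _ = 1 := one_pow 2
  have hS2int : ∀ N, Integrable (fun ω => S N ω ^ 2) P := by
    intro N
    refine Integrable.mono' (integrable_const ((N:ℝ)^2)) ?_ ?_
    · exact (hSint N).aestronglyMeasurable.pow 2
    · filter_upwards [hSbd N] with ω h
      rw [Real.norm_eq_abs, abs_pow]
      exact pow_le_pow_left₀ (abs_nonneg _) h 2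
  have hL2 : ∀ N : ℕ, ∫ ω, S N ω ^ 2 ∂P ≤ (N : ℝ) := by
    intro N
    induction N with
    | zero => simp [hS]
    | succ N ih =>
      have hstep : ∀ ω, S (N+1) ω = S N ω + D (N+1) ω := by
        intro ω
        simp only [hS]
        exact Finset.sum_Icc_succ_top (Nat.le_add_left 1 N) _
      have hexp : ∀ ω, S (N+1) ω ^ 2 = S N ω ^ 2 + 2 * (S N ω * D (N+1) ω) + D (N+1) ω ^ 2 := by
        intro ω; rw [hstep ω]; ring
      have hD2' : Integrable (fun ω => D (N+1) ω ^ 2) P := hD2int (N+1) (Nat.le_add_left 1 N)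
      have hint2 : Integrable (fun ω => S N ω * D (N+1) ω) P := by
        refine Integrable.mono' (integrable_const ((N:ℝ))) ?_ ?_
        · exact ((hSint N).aestronglyMeasurable).mul
            ((hDint (N+1) (Nat.le_add_left 1 N)).aestronglyMeasurable)
        · filter_upwards [hSbd N, hDbd (N+1) (Nat.le_add_left 1 N)] with ω h1 h2
          rw [Real.norm_eq_abs, abs_mul]
          calc |S N ω| * |D (N+1) ω| ≤ (N:ℝ) * 1 :=
                mul_le_mul h1 h2 (abs_nonneg _) (Nat.cast_nonneg N)
            _ = N := mul_one _
      have hD2le : ∫ ω, D (N+1) ω ^ 2 ∂P ≤ 1 := by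
        calc ∫ ω, D (N+1) ω ^ 2 ∂P ≤ ∫ _ω, (1:ℝ) ∂P := by
              refine integral_mono_ae (hD2int (N+1) (Nat.le_add_left 1 N)) (integrable_const 1) ?_
              filter_upwards [hDbd (N+1) (Nat.le_add_left 1 N)] with ω h
              calc D (N+1) ω ^ 2 = |D (N+1) ω| ^ 2 := (sq_abs _).symm
                _ ≤ 1 ^ 2 := pow_le_pow_left₀ (abs_nonneg _) h 2
                _ = 1 := one_pow 2
          _ = 1 := by simp
      have hint2' : Integrable (fun ω => 2 * (S N ω * D (N+1) ω)) P := hint2.const_mul 2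
      have hsum12 : Integrable (fun ω => S N ω ^ 2 + 2 * (S N ω * D (N+1) ω)) P :=
        (hS2int N).add hint2'
      calc ∫ ω, S (N+1) ω ^ 2 ∂P
          = ∫ ω, (S N ω ^ 2 + 2 * (S N ω * D (N+1) ω) + D (N+1) ω ^ 2) ∂P :=
            integral_congr_ae (Eventually.of_forall hexp)
        _ = (∫ ω, S N ω ^ 2 ∂P) + 2 * (∫ ω, S N ω * D (N+1) ω ∂P)
              + ∫ ω, D (N+1) ω ^ 2 ∂P := by
            rw [integral_add hsum12 hD2', integral_add (hS2int N) hint2', integral_const_mul]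
        _ ≤ (N:ℝ) + 2 * 0 + 1 := by
            rw [hcross N]
            exact add_le_add (add_le_add ih le_rfl) hD2le
        _ = ((N:ℕ) + 1 : ℝ) := by ring
        _ = ((N+1 : ℕ) : ℝ) := by push_cast; ring
  -- Chebyshev
  have hcheb : ∀ (N : ℕ) (t : ℝ), 0 < t →
      P {ω | t ≤ |S N ω|} ≤ ENNReal.ofReal ((N : ℝ) / t ^ 2) := by
    intro N t ht
    have hsub : {ω | t ≤ |S N ω|} ⊆ {ω | t ^ 2 ≤ S N ω ^ 2} := by
      intro ω h
      simp only [mem_setOf_eq] at *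
      calc t ^ 2 ≤ |S N ω| ^ 2 := pow_le_pow_left₀ ht.le h 2
        _ = S N ω ^ 2 := sq_abs _
    have hmarkov := mul_meas_ge_le_integral_of_nonneg
      (μ := P) (f := fun ω => S N ω ^ 2)
      (Eventually.of_forall fun ω => sq_nonneg _) (hS2int N) (t ^ 2)
    have ht2 : 0 < t ^ 2 := pow_pos ht 2
    have h1 : (P {ω | t ^ 2 ≤ S N ω ^ 2}).toReal ≤ (N : ℝ) / t ^ 2 := by
      rw [div_eq_inv_mul, ← mul_le_mul_iff_right₀ ht2, ← mul_assoc, mul_inv_cancel₀ ht2.ne', one_mul]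
      exact hmarkov.trans (hL2 N)
    calc P {ω | t ≤ |S N ω|} ≤ P {ω | t ^ 2 ≤ S N ω ^ 2} := measure_mono hsub
      _ = ENNReal.ofReal ((P {ω | t ^ 2 ≤ S N ω ^ 2}).toReal) :=
          (ENNReal.ofReal_toReal (measure_ne_top _ _)).symm
      _ ≤ ENNReal.ofReal ((N : ℝ) / t ^ 2) := ENNReal.ofReal_le_ofReal h1
  -- Borel–Cantelli along squares
  have hBC : ∀ η : ℝ, 0 < η → ∀ᵐ ω ∂P, ∀ᶠ k : ℕ in atTop,
      |S ((k+1)^2) ω| < (((k:ℝ)+1))^2 * η := by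
    intro η hη
    set s : ℕ → Set Ω := fun k => {ω | (((k:ℝ)+1))^2 * η ≤ |S ((k+1)^2) ω|} with hs_def
    have hsum : (∑' k, P (s k)) ≠ ∞ := by
      have hbound : ∀ k : ℕ, P (s k) ≤ ENNReal.ofReal ((1/η^2) * (1/((k:ℝ)+1)^2)) := by
        intro k
        have hk : (0:ℝ) < (((k:ℝ)+1))^2 * η := by positivity
        refine le_trans (hcheb ((k+1)^2) _ hk) (le_of_eq (congrArg ENNReal.ofReal ?_))
        have hk1 : ((k:ℝ)+1) ≠ 0 := by positivity
        push_cast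
        field_simp
      have hsummable : Summable (fun k : ℕ => (1/η^2) * (1/((k:ℝ)+1)^2)) := by
        apply Summable.mul_left
        have h0 : Summable (fun n : ℕ => 1 / (n : ℝ) ^ 2) := Real.summable_one_div_nat_pow.mpr one_lt_two
        have := (summable_nat_add_iff 1).mpr h0
        refine this.congr fun k => ?_
        push_cast
        ring
      have hle' : (∑' k, P (s k)) ≤ ENNReal.ofReal (∑' k : ℕ, (1/η^2) * (1/((k:ℝ)+1)^2)) := by
        calc (∑' k, P (s k)) ≤ ∑' k : ℕ, ENNReal.ofReal ((1/η^2) * (1/((k:ℝ)+1)^2)) :=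
              ENNReal.tsum_le_tsum hbound
          _ = ENNReal.ofReal (∑' k : ℕ, (1/η^2) * (1/((k:ℝ)+1)^2)) :=
              (ENNReal.ofReal_tsum_of_nonneg (fun k => by positivity) hsummable).symm
      exact ne_top_of_le_ne_top ENNReal.ofReal_ne_top hle'
    filter_upwards [ae_eventually_notMem hsum] with ω h
    filter_upwards [h] with k hk
    rw [hs_def] at hk
    simpa using not_le.mp hk
  have hBCall : ∀ᵐ ω ∂P, ∀ j : ℕ, ∀ᶠ k : ℕ in atTop,
      |S ((k+1)^2) ω| < (((k:ℝ)+1))^2 * (1/((j:ℝ)+1)) := by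
    rw [ae_all_iff]
    intro j
    exact hBC (1/((j:ℝ)+1)) (by positivity)
  filter_upwards [hDbd', hBCall] with ω hDb hsq
  show Tendsto (fun N : ℕ => S N ω / N) atTop (nhds 0)
  -- convergence along squares
  have hsq' : Tendsto (fun k : ℕ => |S (k^2) ω| / (k:ℝ)^2) atTop (nhds 0) := by
    rw [Metric.tendsto_atTop]
    intro ε hε
    obtain ⟨j, hj⟩ := exists_nat_one_div_lt hε
    obtain ⟨K, hK⟩ := (hsq j).exists_forall_of_atTop
    refine ⟨K + 1, fun k hk => ?_⟩
    obtain ⟨k', rfl⟩ : ∃ k', k = k' + 1 := ⟨k - 1, by omega⟩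
    have hk' : K ≤ k' := by omega
    have h1 := hK k' hk'
    have hpos : (0:ℝ) < ((k':ℝ)+1)^2 := by positivity
    rw [Real.dist_eq, sub_zero]
    have hval : |S ((k'+1)^2) ω| / ((k':ℝ)+1)^2 < 1/((j:ℝ)+1) := by
      rw [div_lt_iff₀ hpos]
      calc |S ((k'+1)^2) ω| < ((k':ℝ)+1)^2 * (1/((j:ℝ)+1)) := h1
        _ = 1/((j:ℝ)+1) * ((k':ℝ)+1)^2 := by ring
    have hcast : ((k'+1:ℕ):ℝ)^2 = ((k':ℝ)+1)^2 := by push_cast; ring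
    have : |S ((k'+1)^2) ω| / ((k'+1:ℕ):ℝ)^2 < 1/((j:ℝ)+1) := by rw [hcast]; exact hval
    have habs : |(|S ((k'+1)^2) ω| / ((k'+1:ℕ):ℝ)^2)| = |S ((k'+1)^2) ω| / ((k'+1:ℕ):ℝ)^2 := by
      apply abs_of_nonneg; positivity
    rw [habs]
    exact lt_trans this (by exact_mod_cast hj)
  -- interpolation bound
  have hbound : ∀ N : ℕ, 1 ≤ N →
      |S N ω / N| ≤ (|S ((Nat.sqrt N)^2) ω| + 2*(Nat.sqrt N : ℝ)) / ((Nat.sqrt N : ℝ))^2 := by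
    intro N hN
    set k := Nat.sqrt N with hk_def
    have hk1 : 1 ≤ k := Nat.sqrt_pos.mpr hN
    have hk2 : k^2 ≤ N := Nat.sqrt_le' N
    have hk3 : N < (k+1)^2 := Nat.lt_succ_sqrt' N
    have hNk : N - k^2 ≤ 2*k := by
      have e1 : k^2 = k*k := by ring
      have e2 : (k+1)^2 = k*k + 2*k + 1 := by ring
      rw [e1] at hk2 ⊢
      rw [e2] at hk3
      omega
    -- |S N - S (k^2)| ≤ N - k^2
    have hdiff : |S N ω - S (k^2) ω| ≤ ((N - k^2 : ℕ) : ℝ) := by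
      have hsplit : S (k^2) ω + ∑ n ∈ Finset.Ioc (k^2) N, D n ω = S N ω := by
        have e : ∀ x : ℕ, Finset.Icc 1 x = Finset.Ioc 0 x := fun x => Finset.Icc_add_one_left_eq_Ioc 0 x
        simp only [hS]
        rw [e (k^2), e N]
        exact Finset.sum_Ioc_consecutive (fun n => D n ω) (Nat.zero_le _) hk2
      rw [← hsplit]
      simp only [add_sub_cancel_left]
      calc |∑ n ∈ Finset.Ioc (k^2) N, D n ω| ≤ ∑ n ∈ Finset.Ioc (k^2) N, |D n ω| :=
            Finset.abs_sum_le_sum_abs _ _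
        _ ≤ ∑ _n ∈ Finset.Ioc (k^2) N, (1:ℝ) := Finset.sum_le_sum fun n hn => by
            rw [Finset.mem_Ioc] at hn
            exact hDb n (by omega)
        _ = ((N - k^2 : ℕ) : ℝ) := by simp [Nat.card_Ioc]
    have hSN : |S N ω| ≤ |S (k^2) ω| + 2*(k:ℝ) := by
      have h1 : |S N ω| ≤ |S (k^2) ω| + |S N ω - S (k^2) ω| := by
        have := abs_add_le (S (k^2) ω) (S N ω - S (k^2) ω)
        simpa [add_sub_cancel] using this
      have h2 : ((N - k^2 : ℕ) : ℝ) ≤ 2*(k:ℝ) := by exact_mod_cast hNk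
      linarith [hdiff]
    have hNpos : (0:ℝ) < N := by exact_mod_cast hN
    have hkpos : (0:ℝ) < (k:ℝ)^2 := by
      have : (0:ℕ) < k := hk1
      positivity
    have hk2' : ((k:ℝ))^2 ≤ (N:ℝ) := by exact_mod_cast hk2
    rw [abs_div, abs_of_nonneg (Nat.cast_nonneg N : (0:ℝ) ≤ N)]
    have hnum : (0:ℝ) ≤ |S (k^2) ω| + 2*(k:ℝ) := by positivity
    calc |S N ω| / (N:ℝ) ≤ (|S (k^2) ω| + 2*(k:ℝ)) / (N:ℝ) := by gcongr
      _ ≤ (|S (k^2) ω| + 2*(k:ℝ)) / ((k:ℝ))^2 := by gcongr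
  -- assemble via squeeze
  have hsqrt_tendsto : Tendsto Nat.sqrt atTop atTop :=
    tendsto_atTop_atTop_of_monotone (fun a b h => Nat.sqrt_le_sqrt h)
      (fun b => ⟨b^2, (Nat.sqrt_eq' b).ge⟩)
  have h2k : Tendsto (fun k : ℕ => 2/(k:ℝ)) atTop (nhds 0) :=
    tendsto_const_div_atTop_nhds_zero_nat 2
  have hh : Tendsto (fun k : ℕ => (|S (k^2) ω| + 2*(k:ℝ)) / (k:ℝ)^2) atTop (nhds 0) := by
    have hadd := hsq'.add h2k
    rw [add_zero] at hadd
    apply hadd.congr'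
    filter_upwards [eventually_ge_atTop 1] with k hk
    have hkpos : (0:ℝ) < (k:ℝ) := by exact_mod_cast hk
    field_simp
  have hcomp : Tendsto (fun N : ℕ =>
      (|S ((Nat.sqrt N)^2) ω| + 2*(Nat.sqrt N:ℝ)) / ((Nat.sqrt N:ℝ))^2) atTop (nhds 0) :=
    hh.comp hsqrt_tendsto
  apply squeeze_zero_norm' ?_ hcomp
  filter_upwards [eventually_ge_atTop 1] with N hN
  rw [Real.norm_eq_abs, abs_div, abs_of_nonneg (Nat.cast_nonneg N : (0:ℝ) ≤ (N:ℝ))]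
  have h := hbound N hN
  rwa [abs_div, abs_of_nonneg (Nat.cast_nonneg N : (0:ℝ) ≤ (N:ℝ))] at h

/-- Combinatorial bound: escapes of the pair `(X n, X̃ n)` from the enlarged ball are
controlled by visits of `X n` to the complement of the small ball, up to 2 exceptional times. -/
lemma escape_count_le {α : Type*} [MetricSpace α] (x0 : α) (R : ℝ) (x xt : ℕ → α)
    (hNN : IsNNProcess x xt) (N : ℕ) :
    ∑ n ∈ Finset.Icc 1 N,
        Set.indicator {q : α × α | q.1 ∉ closedBall x0 (3*R+1) ∨ q.2 ∉ closedBall x0 (3*R+1)}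
          (fun _ => (1:ℝ)) (x n, xt n)
      ≤ (∑ n ∈ Finset.Icc 1 N, ((closedBall x0 R)ᶜ).indicator (fun _ => (1:ℝ)) (x n)) + 2 := by
  classical
  set 𝒳' := closedBall x0 (3*R+1) with h𝒳'
  set B := closedBall x0 R with hB
  have key : ∀ n, 2 ≤ n → x n ∈ B → (∃ m, 1 ≤ m ∧ m < n ∧ x m ∈ B) →
      x n ∈ 𝒳' ∧ xt n ∈ 𝒳' := by
    rintro n hn hxn ⟨m, hm1, hmn, hxm⟩
    have hxn' : dist (x n) x0 ≤ R := mem_closedBall.mp hxn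
    have hxm' : dist (x m) x0 ≤ R := mem_closedBall.mp hxm
    have hR0 : 0 ≤ R := le_trans dist_nonneg hxn'
    constructor
    · exact closedBall_subset_closedBall (by linarith) hxn
    · obtain ⟨_, hmin⟩ := hNN n hn
      have h1 : dist (x n) (xt n) ≤ dist (x n) (x m) := hmin m hm1 hmn
      have h2 : dist (x n) (x m) ≤ dist (x n) x0 + dist x0 (x m) := dist_triangle _ _ _
      have h3 : dist x0 (x m) = dist (x m) x0 := dist_comm _ _
      rw [h𝒳', mem_closedBall]
      calc dist (xt n) x0 ≤ dist (xt n) (x n) + dist (x n) x0 := dist_triangle _ _ _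
        _ = dist (x n) (xt n) + dist (x n) x0 := by rw [dist_comm]
        _ ≤ 3*R + 1 := by linarith
  set n₀ := sInf {n | 2 ≤ n ∧ x n ∈ B} with hn₀
  have hpoint : ∀ n ∈ Finset.Icc 1 N,
      Set.indicator {q : α × α | q.1 ∉ 𝒳' ∨ q.2 ∉ 𝒳'} (fun _ => (1:ℝ)) (x n, xt n)
        ≤ Bᶜ.indicator (fun _ => (1:ℝ)) (x n)
          + ({1, n₀} : Set ℕ).indicator (fun _ => (1:ℝ)) n := by
    intro n hn
    rw [Finset.mem_Icc] at hn
    have hnonneg1 : (0:ℝ) ≤ Bᶜ.indicator (fun _ => (1:ℝ)) (x n) :=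
      Set.indicator_nonneg (fun _ _ => zero_le_one) _
    have hnonneg2 : (0:ℝ) ≤ ({1, n₀} : Set ℕ).indicator (fun _ => (1:ℝ)) n :=
      Set.indicator_nonneg (fun _ _ => zero_le_one) _
    by_cases hbad : (x n, xt n) ∈ {q : α × α | q.1 ∉ 𝒳' ∨ q.2 ∉ 𝒳'}
    swap
    · rw [Set.indicator_of_notMem hbad]; linarith
    rw [Set.indicator_of_mem hbad]
    by_cases hA : x n ∈ Bᶜ
    · rw [Set.indicator_of_mem hA]; linarith
    have hxnB : x n ∈ B := not_not.mp hA
    have hn1 : n = 1 ∨ n = n₀ := by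
      rcases eq_or_lt_of_le hn.1 with h1 | h2
      · exact Or.inl h1.symm
      right
      have hn2 : 2 ≤ n := h2
      have hne : ∀ m, 1 ≤ m → m < n → x m ∉ B := by
        intro m hm1 hmn hxm
        have hk := key n hn2 hxnB ⟨m, hm1, hmn, hxm⟩
        rcases hbad with h | h
        · exact h hk.1
        · exact h hk.2
      have hmem : n ∈ {n | 2 ≤ n ∧ x n ∈ B} := ⟨hn2, hxnB⟩
      have hlen : n₀ ≤ n := Nat.sInf_le hmem
      have hn₀mem : n₀ ∈ {n | 2 ≤ n ∧ x n ∈ B} := Nat.sInf_mem ⟨n, hmem⟩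
      rcases eq_or_lt_of_le hlen with he | hlt
      · exact he.symm
      · have h10 : 2 ≤ n₀ := hn₀mem.1
        exact absurd hn₀mem.2 (hne n₀ (by omega) hlt)
    have hmemT : n ∈ ({1, n₀} : Set ℕ) := by
      rcases hn1 with h | h
      · simp [h]
      · simp [h]
    rw [Set.indicator_of_mem hmemT]
    linarith
  calc ∑ n ∈ Finset.Icc 1 N,
        Set.indicator {q : α × α | q.1 ∉ 𝒳' ∨ q.2 ∉ 𝒳'} (fun _ => (1:ℝ)) (x n, xt n)
      ≤ ∑ n ∈ Finset.Icc 1 N, (Bᶜ.indicator (fun _ => (1:ℝ)) (x n)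
          + ({1, n₀} : Set ℕ).indicator (fun _ => (1:ℝ)) n) := Finset.sum_le_sum hpoint
    _ = (∑ n ∈ Finset.Icc 1 N, Bᶜ.indicator (fun _ => (1:ℝ)) (x n))
          + ∑ n ∈ Finset.Icc 1 N, ({1, n₀} : Set ℕ).indicator (fun _ => (1:ℝ)) n :=
        Finset.sum_add_distrib
    _ ≤ (∑ n ∈ Finset.Icc 1 N, Bᶜ.indicator (fun _ => (1:ℝ)) (x n)) + 2 := by
        have h1 : ∑ n ∈ Finset.Icc 1 N, ({1, n₀} : Set ℕ).indicator (fun _ => (1:ℝ)) n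
            = ∑ n ∈ (Finset.Icc 1 N).filter (fun n => n ∈ ({1, n₀} : Set ℕ)), (1:ℝ) := by
          rw [Finset.sum_filter]
          refine Finset.sum_congr rfl fun n _ => ?_
          by_cases h : n ∈ ({1, n₀} : Set ℕ)
          · rw [Set.indicator_of_mem h, if_pos h]
          · rw [Set.indicator_of_notMem h, if_neg h]
        have h2 : ((Finset.Icc 1 N).filter (fun n => n ∈ ({1, n₀} : Set ℕ))).card ≤ 2 := by
          have hsub : (Finset.Icc 1 N).filter (fun n => n ∈ ({1, n₀} : Set ℕ))
              ⊆ ({1, n₀} : Finset ℕ) := by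
            intro n hn
            rw [Finset.mem_filter] at hn
            have h := hn.2
            simp only [Set.mem_insert_iff, Set.mem_singleton_iff] at h
            rcases h with h | h <;> simp [h]
          calc ((Finset.Icc 1 N).filter (fun n => n ∈ ({1, n₀} : Set ℕ))).card
              ≤ ({1, n₀} : Finset ℕ).card := Finset.card_le_card hsub
            _ ≤ 2 := by
                have := Finset.card_insert_le 1 ({n₀} : Finset ℕ)
                simpa using this
        rw [h1, Finset.sum_const, nsmul_eq_mul, mul_one]
        have : (((Finset.Icc 1 N).filter (fun n => n ∈ ({1, n₀} : Set ℕ))).card : ℝ) ≤ 2 := by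
          exact_mod_cast h2
        linarith

/-- Escaping a bounded region is rare: if `X` is uniformly dominated
by a finite Borel measure `ν` at a rate `ε` with `ε δ → 0` as `δ → 0⁺`, then for every
`ε' > 0` there is a subset `𝒳'` of bounded diameter such that for every measurable
nearest neighbor process, the asymptotic rate at which `X n` or `X̃ n` escapes `𝒳'` is
less than `ε'` almost surely. -/
theorem bounded_region_escape_rate
    {Ω α : Type*} [MeasurableSpace Ω] [MetricSpace α] [MeasurableSpace α] [BorelSpace α]
    (P : Measure Ω) [IsProbabilityMeasure P] (ν : Measure α) [IsFiniteMeasure ν]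
    (X : ℕ → Ω → α) (hX : ∀ n, Measurable (X n))
    (εr : ℝ → ℝ) (hεpos : ∀ δ : ℝ, 0 < δ → 0 < εr δ)
    (hud : UniformlyDominatedAtRate P X ν εr)
    (hε0 : Filter.Tendsto εr (nhdsWithin 0 (Set.Ioi 0)) (nhds 0))
    (ε : ℝ) (hε : 0 < ε) :
    ∃ 𝒳' : Set α, Bornology.IsBounded 𝒳' ∧
      ∀ Xt : ℕ → Ω → α, (∀ n, Measurable (Xt n)) →
        (∀ ω, IsNNProcess (fun n => X n ω) (fun n => Xt n ω)) →
        ∀ᵐ ω ∂P, Filter.limsup (fun N : ℕ =>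
          (∑ n ∈ Finset.Icc 1 N,
            Set.indicator {q : α × α | q.1 ∉ 𝒳' ∨ q.2 ∉ 𝒳'} (fun _ => (1 : ℝ))
              (X n ω, Xt n ω)) / N) atTop < ε := by
  classical
  -- Ω is nonempty, hence α is nonempty
  have hΩ : Nonempty Ω := by
    by_contra h
    rw [not_nonempty_iff] at h
    have h1 : P univ = 1 := measure_univ
    rw [Set.univ_eq_empty_iff.mpr h, measure_empty] at h1
    exact zero_ne_one h1
  obtain ⟨ω₀⟩ := hΩ
  set x0 : α := X 1 ω₀ with hx0
  -- choose δ with εr δ < ε / 4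
  have h4 : (0:ℝ) < ε/4 := by linarith
  obtain ⟨δ, hδsmall, hδpos⟩ :=
    ((hε0.eventually_lt_const h4).and self_mem_nhdsWithin).exists
  have hδpos' : 0 < δ := hδpos
  -- choose the radius R
  have hiInter : (⋂ R : ℕ, (closedBall x0 (R:ℝ))ᶜ) = ∅ := by
    rw [Set.eq_empty_iff_forall_notMem]
    intro y hy
    rw [Set.mem_iInter] at hy
    exact (hy ⌈dist y x0⌉₊) (mem_closedBall.mpr (Nat.le_ceil _))
  have htend : Tendsto (fun R : ℕ => ν ((closedBall x0 (R:ℝ))ᶜ)) atTop (nhds 0) := by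
    have := tendsto_measure_iInter_atTop (μ := ν)
      (s := fun R : ℕ => (closedBall x0 (R:ℝ))ᶜ)
      (fun R : ℕ => measurableSet_closedBall.compl.nullMeasurableSet)
      (fun a b hab => compl_subset_compl.mpr
        (closedBall_subset_closedBall (Nat.cast_le.mpr hab)))
      ⟨0, measure_ne_top ν _⟩
    rwa [hiInter, measure_empty] at this
  obtain ⟨R, hR⟩ := (htend.eventually_lt_const (ENNReal.ofReal_pos.mpr hδpos')).exists
  set A : Set α := (closedBall x0 (R:ℝ))ᶜ with hA_def
  have hAmeas : MeasurableSet A := measurableSet_closedBall.compl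
  have hud' := hud δ hδpos' A hAmeas hR
  refine ⟨closedBall x0 (3*(R:ℝ)+1), isBounded_closedBall, ?_⟩
  intro Xt hXt hNN
  -- The filtration
  have hle : ∀ n, natFilt X n ≤ ‹MeasurableSpace Ω› := by
    intro n
    exact iSup₂_le fun m _ => (hX m).comap_le
  have hmono : Monotone (natFilt X) := by
    intro a b hab
    exact biSup_mono fun m hm => ⟨hm.1, hm.2.trans hab⟩
  set Y : ℕ → Ω → ℝ := fun n ω => A.indicator (fun _ => (1:ℝ)) (X n ω) with hY_def
  have hYSM : ∀ n, 1 ≤ n → StronglyMeasurable[natFilt X n] (Y n) := by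
    intro n hn
    have hset : MeasurableSet[MeasurableSpace.comap (X n) inferInstance] (X n ⁻¹' A) :=
      ⟨A, hAmeas, rfl⟩
    have h1 : StronglyMeasurable[MeasurableSpace.comap (X n) inferInstance] (Y n) := by
      have : Y n = (X n ⁻¹' A).indicator (fun _ => (1:ℝ)) := by
        funext ω
        simp only [hY_def, Set.indicator_apply, Set.mem_preimage]
      rw [this]
      exact stronglyMeasurable_const.indicator hset
    exact h1.mono (le_iSup₂ (f := fun m (_ : m ∈ Set.Icc 1 n) =>
      MeasurableSpace.comap (X m) inferInstance) n ⟨hn, le_rfl⟩)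
  have hY0 : ∀ n ω, 0 ≤ Y n ω := fun n ω =>
    Set.indicator_nonneg (fun _ _ => zero_le_one) _
  have hY1 : ∀ n ω, Y n ω ≤ 1 := by
    intro n ω
    by_cases h : X n ω ∈ A
    · simp [hY_def, Set.indicator_of_mem h]
    · simp [hY_def, Set.indicator_of_notMem h]
  have hslln := slln_aux P (natFilt X) hle hmono Y hYSM hY0 hY1
  filter_upwards [hslln, hud'] with ω hT hg
  -- pointwise bound on partial averages
  set F : ℕ → ℝ := fun N => ∑ n ∈ Finset.Icc 1 N,
    Set.indicator {q : α × α | q.1 ∉ closedBall x0 (3*(R:ℝ)+1) ∨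
      q.2 ∉ closedBall x0 (3*(R:ℝ)+1)} (fun _ => (1:ℝ)) (X n ω, Xt n ω) with hF_def
  set SD : ℕ → ℝ := fun N => ∑ n ∈ Finset.Icc 1 N,
    (Y n ω - (P[Y n | natFilt X (n-1)]) ω) with hSD_def
  have hFbound : ∀ N : ℕ, 1 ≤ N → F N / N ≤ SD N / N + ε/4 + 2/N := by
    intro N hN
    have hNpos : (0:ℝ) < N := by exact_mod_cast hN
    have h1 : F N ≤ (∑ n ∈ Finset.Icc 1 N, Y n ω) + 2 :=
      escape_count_le x0 (R:ℝ) (fun n => X n ω) (fun n => Xt n ω) (hNN ω) N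
    have h2 : (∑ n ∈ Finset.Icc 1 N, Y n ω)
        = SD N + ∑ n ∈ Finset.Icc 1 N, (P[Y n | natFilt X (n-1)]) ω := by
      rw [hSD_def]
      rw [← Finset.sum_add_distrib]
      refine Finset.sum_congr rfl fun n _ => ?_
      ring
    have h3 : (∑ n ∈ Finset.Icc 1 N, (P[Y n | natFilt X (n-1)]) ω) ≤ N * (ε/4) := by
      calc (∑ n ∈ Finset.Icc 1 N, (P[Y n | natFilt X (n-1)]) ω)
          ≤ ∑ _n ∈ Finset.Icc 1 N, (ε/4) := by
            refine Finset.sum_le_sum fun n hn => ?_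
            rw [Finset.mem_Icc] at hn
            exact le_of_lt (lt_trans (hg n hn.1) hδsmall)
        _ = N * (ε/4) := by simp [Nat.card_Icc]
    have h4' : F N ≤ SD N + N * (ε/4) + 2 := by linarith
    calc F N / N ≤ (SD N + N * (ε/4) + 2) / N := by gcongr
      _ = SD N / N + ε/4 + 2/N := by field_simp
  -- the comparison sequence tends to ε/4
  have hu : Tendsto (fun N : ℕ => SD N / N + ε/4 + 2/N) atTop (nhds (ε/4)) := by
    have h := (hT.add (tendsto_const_nhds (x := ε/4))).add
      (tendsto_const_div_atTop_nhds_zero_nat 2)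
    rw [zero_add, add_zero] at h
    exact h
  -- conclude
  have hF0 : ∀ N, 0 ≤ F N / N := by
    intro N
    apply div_nonneg _ (Nat.cast_nonneg N)
    exact Finset.sum_nonneg fun n _ => Set.indicator_nonneg (fun _ _ => zero_le_one) _
  have hlimsup : Filter.limsup (fun N : ℕ => F N / N) atTop
      ≤ Filter.limsup (fun N : ℕ => SD N / N + ε/4 + 2/N) atTop := by
    refine Filter.limsup_le_limsup ?_ ?_ ?_
    · filter_upwards [eventually_ge_atTop 1] with N hN
      exact hFbound N hN
    · exact isCoboundedUnder_le_of_le atTop hF0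
    · exact hu.isBoundedUnder_le
  calc Filter.limsup (fun N : ℕ => F N / N) atTop
      ≤ Filter.limsup (fun N : ℕ => SD N / N + ε/4 + 2/N) atTop := hlimsup
    _ = ε/4 := hu.limsup_eq
    _ < ε := by linarith
end
end

section
/- Let (𝒳, ρ) be a length space and η : 𝒳 → 𝒴 a labeling function. Then for every x ∈ 𝒳, margin_η(x) = ρ(x, ∂_η𝒳), where ρ(x, ∅) = +∞ by convention. -/
open MeasureTheory Filter Set Metric
open scoped ENNReal NNReal

noncomputable section

lemma exists_boundary_on_path {α 𝒴 : Type*} [MetricSpace α] (η : α → 𝒴)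
    (γ : ℝ → α) (hγ : ContinuousOn γ (Set.Icc 0 1))
    (hne : η (γ 1) ≠ η (γ 0)) :
    ∃ t ∈ Set.Icc (0:ℝ) 1, margin η (γ t) = 0 := by
  set S : Set ℝ := {t ∈ Set.Icc (0:ℝ) 1 | η (γ t) = η (γ 0)} with hS
  have hS0 : (0:ℝ) ∈ S := ⟨⟨le_refl _, zero_le_one⟩, rfl⟩
  have hSne : S.Nonempty := ⟨0, hS0⟩
  have hbdd : BddAbove S := ⟨1, fun t ht => ht.1.2⟩
  set t₀ := sSup S with ht₀
  have ht₀mem : t₀ ∈ Set.Icc (0:ℝ) 1 :=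
    ⟨le_csSup hbdd hS0, csSup_le hSne fun t ht => ht.1.2⟩
  refine ⟨t₀, ht₀mem, ?_⟩
  refine le_antisymm ?_ zero_le
  refine ENNReal.le_of_forall_pos_le_add fun ε hε _ => ?_
  rw [zero_add]
  have hc : ContinuousWithinAt γ (Set.Icc 0 1) t₀ := hγ t₀ ht₀mem
  have hball : {y | edist (γ t₀) y < (ε : ℝ≥0∞)} ∈ nhds (γ t₀) := by
    have : (0:ℝ≥0∞) < ε := by exact_mod_cast hε
    simpa [Metric.eball, edist_comm] using EMetric.ball_mem_nhds (γ t₀) this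
  by_cases hlabel : η (γ t₀) = η (γ 0)
  · -- t₀ < 1, find s > t₀ close with different label
    have ht₀lt : t₀ < 1 := lt_of_le_of_ne ht₀mem.2 (fun h => hne (h ▸ hlabel))
    have hc' : Filter.Tendsto γ (nhdsWithin t₀ (Set.Ioc t₀ 1)) (nhds (γ t₀)) :=
      hc.mono (fun s hs => ⟨le_trans ht₀mem.1 hs.1.le, hs.2⟩)
    have hNB : (nhdsWithin t₀ (Set.Ioc t₀ 1)).NeBot := by
      rw [nhdsWithin_Ioc_eq_nhdsGT ht₀lt]
      infer_instance
    have hev : ∀ᶠ s in nhdsWithin t₀ (Set.Ioc t₀ 1),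
        edist (γ t₀) (γ s) < (ε : ℝ≥0∞) := hc' hball
    obtain ⟨s, hs1, hs2⟩ := (hev.and self_mem_nhdsWithin).exists
    have hsS : s ∉ S := fun h => absurd (le_csSup hbdd h) (not_le.mpr hs2.1)
    have hηs : η (γ s) ≠ η (γ t₀) := by
      rw [hlabel]
      exact fun h => hsS ⟨⟨le_trans ht₀mem.1 hs2.1.le, hs2.2⟩, h⟩
    calc margin η (γ t₀) ≤ edist (γ t₀) (γ s) := iInf₂_le (γ s) hηs
      _ ≤ ε := hs1.le
  · -- find t ∈ S close below t₀
    obtain ⟨δ, hδ, hδsub⟩ := Metric.mem_nhdsWithin_iff.mp (hc hball)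
    obtain ⟨t, htS, htlt⟩ := exists_lt_of_lt_csSup hSne (by linarith : t₀ - δ < t₀)
    have htb : t ∈ Metric.ball t₀ δ := by
      rw [Metric.mem_ball, Real.dist_eq, abs_sub_lt_iff]
      constructor <;> [linarith [le_csSup hbdd htS]; linarith]
    have hedist : edist (γ t₀) (γ t) < (ε : ℝ≥0∞) := hδsub ⟨htb, htS.1⟩
    have hηt : η (γ t) ≠ η (γ t₀) := fun h => hlabel (h ▸ htS.2)
    calc margin η (γ t₀) ≤ edist (γ t₀) (γ t) := iInf₂_le (γ t) hηt
      _ ≤ ε := hedist.le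

/-- Margin equals distance to the boundary in length spaces. -/
theorem margin_eq_infEdist_boundary_of_lengthSpace
    {α 𝒴 : Type*} [MetricSpace α] (hl : IsLengthSpace α) (η : α → 𝒴) (x : α) :
    margin η x = EMetric.infEdist x (labelBoundary η) := by
  apply le_antisymm
  · -- margin ≤ infEdist : bound margin by edist x z for all boundary z
    rw [EMetric.infEdist]
    refine le_iInf₂ fun z hz => ?_
    by_cases h : η z = η x
    · refine ENNReal.le_of_forall_pos_le_add fun ε hε _ => ?_
      have hmz : margin η z < (ε : ℝ≥0∞) := by
        rw [show margin η z = 0 from hz]; exact_mod_cast hε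
      rw [margin] at hmz
      obtain ⟨z', hz'⟩ := iInf_lt_iff.mp hmz
      obtain ⟨hη, hd⟩ := iInf_lt_iff.mp hz'
      have hη' : η z' ≠ η x := h ▸ hη
      calc margin η x ≤ edist x z' := iInf₂_le z' hη'
        _ ≤ edist x z + edist z z' := edist_triangle _ _ _
        _ ≤ edist x z + ε := by gcongr
    · exact iInf₂_le z h
  · -- infEdist ≤ margin
    refine ENNReal.le_of_forall_pos_le_add fun ε hε hmt => ?_
    have hε' : (0:ℝ≥0∞) < ε := by exact_mod_cast hε
    have hlt : margin η x < margin η x + ε := ENNReal.lt_add_right hmt.ne (by exact_mod_cast hε.ne')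
    rw [margin] at hlt
    obtain ⟨x', hx'⟩ := iInf_lt_iff.mp hlt
    obtain ⟨hη, hd⟩ := iInf_lt_iff.mp hx'
    rw [hl x x'] at hd
    obtain ⟨γ, hγ⟩ := iInf_lt_iff.mp hd
    obtain ⟨hcont, h2⟩ := iInf_lt_iff.mp hγ
    obtain ⟨hγ0, h3⟩ := iInf_lt_iff.mp h2
    obtain ⟨hγ1, hvar⟩ := iInf_lt_iff.mp h3
    have hne : η (γ 1) ≠ η (γ 0) := by rw [hγ0, hγ1]; exact hη
    obtain ⟨t, ht, hbd⟩ := exists_boundary_on_path η γ hcont hne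
    calc EMetric.infEdist x (labelBoundary η) ≤ edist x (γ t) :=
          EMetric.infEdist_le_edist_of_mem hbd
      _ = edist (γ 0) (γ t) := by rw [hγ0]
      _ ≤ eVariationOn γ (Set.Icc 0 1) :=
          eVariationOn.edist_le γ ⟨le_refl _, zero_le_one⟩ ht
      _ ≤ margin η x + ε := hvar.le
end
end

section
/- Let (𝒳, ρ) be a length space and η : 𝒳 → 𝒴 a labeling function. For every r > 0, the complement of V_r = {x ∈ 𝒳 : margin_η(x) ≥ r} equals the r-expansion ∂_η𝒳^r of the boundary: 𝒳 ∖ V_r = ∪_{z ∈ ∂_η𝒳} B(z, r). -/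
/-
A point `x` of margin `< r` has a differently labelled point within distance `< r`; in a length
space the two are joined by a path of length `< r`. The label cannot change along a connected set
without the set meeting the boundary, because off the boundary the label is locally constant; so
the path meets `∂η` at distance `< r` from `x`. Conversely, `margin η x ≤ edist x z + margin η z`:
a point labelled differently from `z` is labelled differently from `x`, or else `z` itself is.
-/

open MeasureTheory Filter Set Metric
open scoped ENNReal NNReal

noncomputable section

open Topology

section Margin

variable {α 𝒴 : Type*} [PseudoMetricSpace α] {η : α → 𝒴}

theorem margin_le_edist {x y : α} (h : η y ≠ η x) : margin η x ≤ edist x y :=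
  iInf₂_le y h

theorem exists_edist_lt_of_margin_lt {x : α} {c : ℝ≥0∞} (h : margin η x < c) :
    ∃ y, η y ≠ η x ∧ edist x y < c := by
  simpa only [margin, iInf_lt_iff, exists_prop] using h

theorem margin_le_edist_add_margin (x z : α) : margin η x ≤ edist x z + margin η z := by
  simp only [margin, ENNReal.add_iInf]
  refine le_iInf₂ fun y hyz ↦ ?_
  by_cases hyx : η y = η x
  · exact (margin_le_edist (hyx ▸ hyz).symm).trans le_self_add
  · exact (margin_le_edist hyx).trans (edist_triangle x z y)

theorem eventually_eq_of_margin_ne_zero {x : α} (h : margin η x ≠ 0) :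
    ∀ᶠ y in 𝓝 x, η y = η x := by
  filter_upwards [eball_mem_nhds x (pos_iff_ne_zero.mpr h)] with y hy
  by_contra hne
  exact (margin_le_edist hne).not_gt (by rwa [edist_comm])

theorem IsPreconnected.inter_labelBoundary_nonempty {s : Set α} (hs : IsPreconnected s)
    {x y : α} (hx : x ∈ s) (hy : y ∈ s) (hxy : η x ≠ η y) :
    (s ∩ labelBoundary η).Nonempty := by
  by_contra hempty
  let _ : TopologicalSpace 𝒴 := ⊥
  have : DiscreteTopology 𝒴 := ⟨rfl⟩
  refine hxy (hs.constant (f := η) (fun z hz ↦ ContinuousAt.continuousWithinAt ?_) hx hy)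
  rw [ContinuousAt, nhds_discrete 𝒴, tendsto_pure]
  exact eventually_eq_of_margin_ne_zero fun h0 ↦ hempty ⟨z, hz, h0⟩

theorem margin_lt_of_mem_expansion_labelBoundary {x : α} {r : ℝ}
    (hx : x ∈ expansion (labelBoundary η) r) : margin η x < ENNReal.ofReal r := by
  obtain ⟨z, hz, hxz⟩ := mem_iUnion₂.1 hx
  calc margin η x ≤ edist x z + margin η z := margin_le_edist_add_margin x z
    _ < ENNReal.ofReal r := by rwa [hz, add_zero, edist_lt_ofReal]

end Margin

theorem IsLengthSpace.exists_path_eVariationOn_lt {α : Type*} [PseudoMetricSpace α]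
    (hl : IsLengthSpace α) {x y : α} {c : ℝ≥0∞} (h : edist x y < c) :
    ∃ γ : ℝ → α, ContinuousOn γ (Icc 0 1) ∧ γ 0 = x ∧ γ 1 = y ∧
      eVariationOn γ (Icc 0 1) < c := by
  simpa only [hl x y, iInf_lt_iff, exists_prop] using h

theorem IsLengthSpace.mem_expansion_labelBoundary_of_margin_lt {α 𝒴 : Type*}
    [PseudoMetricSpace α] (hl : IsLengthSpace α) {η : α → 𝒴} {x : α} {r : ℝ}
    (hx : margin η x < ENNReal.ofReal r) : x ∈ expansion (labelBoundary η) r := by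
  obtain ⟨y, hyx, hxy⟩ := exists_edist_lt_of_margin_lt hx
  obtain ⟨γ, hγ, rfl, rfl, hlen⟩ := hl.exists_path_eVariationOn_lt hxy
  have h0 : (0 : ℝ) ∈ Icc 0 1 := left_mem_Icc.2 zero_le_one
  have h1 : (1 : ℝ) ∈ Icc 0 1 := right_mem_Icc.2 zero_le_one
  obtain ⟨_, ⟨t, ht, rfl⟩, hz⟩ := (isPreconnected_Icc.image γ hγ).inter_labelBoundary_nonempty
    (mem_image_of_mem γ h0) (mem_image_of_mem γ h1) hyx.symm
  refine mem_iUnion₂.2 ⟨γ t, hz, edist_lt_ofReal.1 ?_⟩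
  exact (eVariationOn.edist_le γ h0 ht).trans_lt hlen

theorem compl_margin_set_eq_expansion_boundary_general
    {α 𝒴 : Type*} [MetricSpace α] (hl : IsLengthSpace α) (η : α → 𝒴)
    (r : ℝ) :
    {x : α | ENNReal.ofReal r ≤ margin η x}ᶜ = expansion (labelBoundary η) r := by
  ext x
  rw [mem_compl_iff, mem_ofPred_eq, not_le]
  exact ⟨hl.mem_expansion_labelBoundary_of_margin_lt, margin_lt_of_mem_expansion_labelBoundary⟩

/-- In a length space, the complement of the `r`-margin set is the
`r`-expansion of the boundary. -/
theorem compl_margin_set_eq_expansion_boundary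
    {α 𝒴 : Type*} [MetricSpace α] (hl : IsLengthSpace α) (η : α → 𝒴)
    (r : ℝ) (hr : 0 < r) :
    {x : α | ENNReal.ofReal r ≤ margin η x}ᶜ = expansion (labelBoundary η) r :=
  compl_margin_set_eq_expansion_boundary_general hl η r
end
end
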